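/- Let (X, r) be a non-degenerate involutive set-theoretic solution of the Yang–Baxter equation with |X| = m ≥ 2, let λ ∈ P(n, m) have positive parts λ_1 ≥ ⋯ ≥ λ_k > 0, and let x ∈ X^n be a λ-element. Then the cardinality of the orbit of x is |O(x)| = n!/(λ_1! λ_2! ⋯ λ_k!). -/

import Mathlib

/-! Set-theoretic solutions of the Yang–Baxter equation.
For `r : X × X → X × X` we write `r (i, j) = (σ i j, τ j i)`, i.e. `σ_i(j) = σ i j` and
`τ_j(i) = τ j i`. -/

variable {X : Type*}

/-- The map `r : X × X → X × X` determined by families `σ`, `τ` via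
`r (i, j) = (σ_i(j), τ_j(i))`. -/
def rmapF (σ τ : X → X → X) : X × X → X × X := fun p => (σ p.1 p.2, τ p.2 p.1)

/-- `r × id` on `X × X × X`. -/
def ridF (r : X × X → X × X) : X × X × X → X × X × X :=
  fun p => ((r (p.1, p.2.1)).1, (r (p.1, p.2.1)).2, p.2.2)

/-- `id × r` on `X × X × X`. -/
def idrF (r : X × X → X × X) : X × X × X → X × X × X := fun p => (p.1, r p.2)

/-- The braid (Yang–Baxter) equation `(r × id) ∘ (id × r) ∘ (r × id) = (id × r) ∘ (r × id) ∘ (id × r)`. -/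
def BraidEq (r : X × X → X × X) : Prop :=
  ridF r ∘ idrF r ∘ ridF r = idrF r ∘ ridF r ∘ idrF r

/-- A non-degenerate involutive set-theoretic solution of the Yang–Baxter equation on `X`:
the maps `σ_i` and `τ_i` are bijective (packaged as equivalences), the induced map
`r (i, j) = (σ_i(j), τ_j(i))` satisfies the braid equation, and `r ∘ r = id`
(which in particular makes `r` bijective). -/
structure NDIS (X : Type*) where
  σ : X → X ≃ X
  τ : X → X ≃ X
  braid : BraidEq (rmapF (fun i => ⇑(σ i)) (fun i => ⇑(τ i)))
  invol : ∀ p : X × X,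
    rmapF (fun i => ⇑(σ i)) (fun i => ⇑(τ i))
      (rmapF (fun i => ⇑(σ i)) (fun i => ⇑(τ i)) p) = p

namespace NDIS

/-- The map `r` of the solution. -/
def r (S : NDIS X) : X × X → X × X := rmapF (fun i => ⇑(S.σ i)) (fun i => ⇑(S.τ i))

/-- The diagonal `D : X → X`, `D(i) = τ_i⁻¹(i)`. -/
def D (S : NDIS X) : X → X := fun i => (S.τ i).symm i

end NDIS
namespace NDIS

/-- One elementary move on words: apply `r` to two adjacent letters. -/
def Step (S : NDIS X) (x y : List X) : Prop :=
  ∃ (u v : List X) (i j : X), x = u ++ i :: j :: v ∧ y = u ++ S.σ i j :: S.τ j i :: v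

/-- The orbit `O(x)` of a word `x` under the equivalence relation generated by the
adjacent `r`-moves (equivalently, the orbit of the induced `S_n`-action on `X^n`). -/
def Orb (S : NDIS X) (x : List X) : Set (List X) := {y | Relation.EqvGen S.Step x y}

/-- `Ψ_k(a) = (D^{k−1}(a), …, D(a), a)`. -/
def Psi (S : NDIS X) (k : ℕ) (a : X) : List X :=
  (List.range k).map fun t => S.D^[k - 1 - t] a

/-- The inverse of the diagonal `D`. -/
noncomputable def Dinv (S : NDIS X) [Nonempty X] : X → X := Function.invFun S.D

/-- `Ψ_{−k}(a) = (a, D^{−1}(a), …, D^{−(k−1)}(a))`. -/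
noncomputable def PsiNeg (S : NDIS X) [Nonempty X] (k : ℕ) (a : X) : List X :=
  (List.range k).map fun t => S.Dinv^[t] a

/-- `σ_x = σ_{a_1} ∘ σ_{a_2} ∘ ⋯ ∘ σ_{a_k}` for a word `x = (a_1, …, a_k)`. -/
def sigmaWord (S : NDIS X) (x : List X) (z : X) : X := x.foldr (fun a w => S.σ a w) z

/-- `τ_x = τ_{a_k} ∘ ⋯ ∘ τ_{a_2} ∘ τ_{a_1}` for a word `x = (a_1, …, a_k)`. -/
def tauWord (S : NDIS X) (x : List X) (z : X) : X := x.foldl (fun w a => S.τ a w) z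

/-- The concatenation `Ψ_{L 0}(a 0) Ψ_{L 1}(a 1) ⋯ Ψ_{L (k-1)}(a (k-1))`. -/
def word (S : NDIS X) {k : ℕ} (L : Fin k → ℕ) (a : Fin k → X) : List X :=
  (List.ofFn fun t => S.Psi (L t) (a t)).flatten

/-- The concatenation `Ψ_{L (i+1)}(a (i+1)) ⋯ Ψ_{L (j-1)}(a (j-1))` of the blocks strictly
between positions `i` and `j` (the empty word when `j = i + 1`). -/
def midword (S : NDIS X) {k : ℕ} (L : Fin k → ℕ) (a : Fin k → X) (i j : Fin k) : List X :=
  (((List.ofFn fun t => S.Psi (L t) (a t)).drop ((i : ℕ) + 1)).take ((j : ℕ) - (i : ℕ) - 1)).flatten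

/-- The family `a` yields a `λ`-element: `a_j ≠ D^{−λ_j}(τ_w(a_i))` for all `i < j`, with
`w = Ψ_{λ_{i+1}}(a_{i+1}) ⋯ Ψ_{λ_{j−1}}(a_{j−1})`. -/
def IsLambdaFamily (S : NDIS X) [Nonempty X] {k : ℕ} (L : Fin k → ℕ) (a : Fin k → X) : Prop :=
  ∀ i j : Fin k, i < j →
    a j ≠ S.Dinv^[L j] (S.tauWord (S.midword L a i j) (a i))

/-- `x` is a `λ`-element for the partition with positive parts `L 0 ≥ L 1 ≥ ⋯ ≥ L (k-1) > 0`. -/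
def IsLambdaWord (S : NDIS X) [Nonempty X] {k : ℕ} (L : Fin k → ℕ) (x : List X) : Prop :=
  ∃ a : Fin k → X, x = S.word L a ∧ S.IsLambdaFamily L a

/-- The bijection `b` of `X^n` applying `r` to the entries in (0-based) positions `j` and
`j + 1` and fixing all other entries. -/
def bmap (S : NDIS X) {n : ℕ} (j : ℕ) (hj : j + 1 < n) (x : Fin n → X) : Fin n → X :=
  fun t =>
    if (t : ℕ) = j then S.σ (x ⟨j, by omega⟩) (x ⟨j + 1, hj⟩)
    else if (t : ℕ) = j + 1 then S.τ (x ⟨j + 1, hj⟩) (x ⟨j, by omega⟩)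
    else x t

/-- One elementary move on `X^n` (as functions `Fin n → X`). -/
def StepF (S : NDIS X) {n : ℕ} (x y : Fin n → X) : Prop :=
  ∃ (j : ℕ) (hj : j + 1 < n), y = S.bmap j hj x

end NDIS

/-- The offset `λ_1 + ⋯ + λ_i` of the `i`-th block (0-based). -/
def blockOffset {k : ℕ} (L : Fin k → ℕ) (i : Fin k) : ℕ :=
  ∑ t ∈ Finset.univ.filter (fun t => t < i), L t

/-- A `(λ_1, …, λ_k)`-shuffle: a permutation strictly increasing on each consecutive block. -/
def IsShuffle {k n : ℕ} (L : Fin k → ℕ) (θ : Equiv.Perm (Fin n)) : Prop :=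
  ∀ (i : Fin k) (p q : Fin n), blockOffset L i ≤ (p : ℕ) → p < q →
    (q : ℕ) < blockOffset L i + L i → θ p < θ q

/-!
Encode the word `Ψ_{l₁}(a₁) ⋯ Ψ_{lₖ}(aₖ)` by its list of blocks `(lᵢ, aᵢ)`. Moving the first
letter of a nonempty block to the front by `r`-moves leaves a word of the same shape, with that
block shortened by one. Doing this for two blocks, in either order, gives the same word up to one
application of `r` to the two front letters; hence the orbit is the union over the nonempty
blocks `i` of `cᵢ · O(extracted word)`, where `cᵢ` is the letter brought to the front from block
`i`. For a `λ`-element the letters `cᵢ` are pairwise distinct, and this survives extraction since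
the new front letters are the `σ_{cᵢ}⁻¹(cⱼ)`. So the union is disjoint, and
`|O| · ∏ lᵢ! = n!` follows by induction on `n` from `∑ lᵢ = n`.
-/

namespace NDIS

section Solution

variable (S : NDIS X)

lemma sigma_sigma_tau (i j : X) : S.σ (S.σ i j) (S.τ j i) = i :=
  congrArg Prod.fst (S.invol (i, j))

lemma tau_tau_sigma (i j : X) : S.τ (S.τ j i) (S.σ i j) = j :=
  congrArg Prod.snd (S.invol (i, j))

lemma sigma_sigma (x y z : X) : S.σ x (S.σ y z) = S.σ (S.σ x y) (S.σ (S.τ y x) z) :=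
  (congrArg Prod.fst (congrFun S.braid (x, y, z))).symm

lemma tau_sigma_sigma (x y z : X) :
    S.τ (S.σ (S.τ y x) z) (S.σ x y) = S.σ (S.τ (S.σ y z) x) (S.τ z y) :=
  congrArg (·.2.1) (congrFun S.braid (x, y, z))

lemma tau_tau (x y z : X) : S.τ z (S.τ y x) = S.τ (S.τ z y) (S.τ (S.σ y z) x) :=
  congrArg (·.2.2) (congrFun S.braid (x, y, z))

lemma tau_D (a : X) : S.τ a (S.D a) = a := (S.τ a).apply_symm_apply a

lemma sigma_D (a : X) : S.σ (S.D a) a = S.D a := by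
  have h := S.tau_tau_sigma (S.D a) a
  rw [S.tau_D] at h
  exact ((S.τ a).symm_apply_eq.mpr h.symm).symm

lemma r_D (a : X) : S.r (S.D a, a) = (S.D a, a) := by
  simp only [r, rmapF, sigma_D, tau_D]

lemma tau_sigma_D (a v : X) : S.τ (S.σ a v) (S.D a) = S.D (S.τ v a) := by
  have h := S.tau_tau (S.D a) a v
  rw [S.tau_D] at h
  exact ((S.τ (S.τ v a)).symm_apply_eq.mpr h).symm

lemma tau_D_sigma (u c : X) : S.τ u (S.D (S.σ u c)) = S.D c := by
  simpa only [sigma_sigma_tau, tau_tau_sigma] using S.tau_sigma_D (S.σ u c) (S.τ c u)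

lemma sigma_D_eq (p v : X) : S.σ p (S.D v) = S.D (S.σ (S.τ (S.D v) p) v) :=
  (S.τ (S.τ (S.D v) p)).injective <|
    (S.tau_tau_sigma p (S.D v)).trans (S.tau_D_sigma (S.τ (S.D v) p) v).symm

lemma D_bijective : Function.Bijective S.D := by
  refine Function.bijective_iff_has_inverse.2 ⟨fun c => (S.σ c).symm c, fun a => ?_, fun c => ?_⟩
  · exact (S.σ (S.D a)).symm_apply_eq.mpr (S.sigma_D a).symm
  · set b := (S.σ c).symm c
    have hσ : S.σ c b = c := (S.σ c).apply_symm_apply c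
    have hτ : S.τ b c = b := by
      have h := S.sigma_sigma_tau c b
      rw [hσ] at h
      exact (S.σ c).injective (h.trans hσ.symm)
    exact (S.τ b).symm_apply_eq.mpr hτ.symm

end Solution

section Words

variable (S : NDIS X)

@[simp] lemma sigmaWord_cons (a : X) (u : List X) (z : X) :
    S.sigmaWord (a :: u) z = S.σ a (S.sigmaWord u z) := rfl

lemma sigmaWord_append (u v : List X) (z : X) :
    S.sigmaWord (u ++ v) z = S.sigmaWord u (S.sigmaWord v z) :=
  List.foldr_append ..

@[simp] lemma tauWord_cons (a : X) (u : List X) (z : X) :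
    S.tauWord (a :: u) z = S.tauWord u (S.τ a z) := rfl

lemma sigmaWord_injective (u : List X) : Function.Injective (S.sigmaWord u) := by
  induction u with
  | nil => exact Function.injective_id
  | cons a u ih => exact (S.σ a).injective.comp ih

lemma tauWord_injective (u : List X) : Function.Injective (S.tauWord u) := by
  induction u with
  | nil => exact Function.injective_id
  | cons a u ih => exact ih.comp (S.τ a).injective

lemma tauWord_D_sigmaWord (u : List X) (z : X) : S.tauWord u (S.D (S.sigmaWord u z)) = S.D z := by
  induction u with
  | nil => rfl
  | cons a u ih => rw [sigmaWord_cons, tauWord_cons, tau_D_sigma, ih]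

/-- `twistWord u z` is what is left of `u` once the letter `z`, standing right of `u`, has been
moved through `u` to the front (see `eqvGen_move_front`). -/
def twistWord : List X → X → List X
  | [], _ => []
  | a :: u, z => S.τ (S.sigmaWord u z) a :: twistWord u z

@[simp] lemma twistWord_cons (a : X) (u : List X) (z : X) :
    S.twistWord (a :: u) z = S.τ (S.sigmaWord u z) a :: S.twistWord u z := rfl

lemma twistWord_append (u v : List X) (z : X) :
    S.twistWord (u ++ v) z = S.twistWord u (S.sigmaWord v z) ++ S.twistWord v z := by
  induction u with
  | nil => rfl
  | cons a u ih => simp [ih, sigmaWord_append]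

/-- Moving two letters `y z` through `u` commutes with applying `r` to them. -/
lemma r_sigmaWord_twistWord (u : List X) (y z : X) :
    S.r (S.sigmaWord u y, S.sigmaWord (S.twistWord u y) z)
      = (S.sigmaWord u (S.σ y z), S.sigmaWord (S.twistWord u (S.σ y z)) (S.τ z y)) := by
  induction u with
  | nil => rfl
  | cons p u ih =>
    simp only [r, rmapF, Prod.mk.injEq] at ih ⊢
    simp only [sigmaWord_cons, twistWord_cons]
    constructor
    · rw [← sigma_sigma, ih.1]
    · rw [tau_sigma_sigma, ih.1, ih.2]

lemma tau_tau_sigmaWord_twistWord (u : List X) (y z p : X) :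
    S.τ (S.sigmaWord (S.twistWord u (S.σ y z)) (S.τ z y)) (S.τ (S.sigmaWord u (S.σ y z)) p)
      = S.τ (S.sigmaWord (S.twistWord u y) z) (S.τ (S.sigmaWord u y) p) := by
  have h := S.r_sigmaWord_twistWord u y z
  simp only [r, rmapF, Prod.mk.injEq] at h
  rw [S.tau_tau p (S.sigmaWord u y), h.1, h.2]

lemma sigmaWord_D (u : List X) (v : X) :
    S.sigmaWord u (S.D v) = S.D (S.sigmaWord (S.twistWord u (S.D v)) v) := by
  induction u with
  | nil => rfl
  | cons p u ih => rw [sigmaWord_cons, twistWord_cons, sigmaWord_cons, ih, sigma_D_eq, ← ih]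

end Words

section Psi

variable (S : NDIS X)

lemma Psi_succ (k : ℕ) (a : X) : S.Psi (k + 1) a = S.D^[k] a :: S.Psi k a := by
  simp only [Psi, List.range_succ_eq_map, List.map_cons, List.map_map]
  refine List.cons_eq_cons.mpr ⟨by simp, List.map_congr_left fun t _ => ?_⟩
  simp only [Function.comp_apply]
  congr 1
  omega

@[simp] lemma length_Psi (k : ℕ) (a : X) : (S.Psi k a).length = k := by simp [Psi]

lemma tau_sigmaWord_Psi (a v : X) (k : ℕ) :
    S.τ (S.sigmaWord (S.Psi k a) v) (S.D^[k] a) = S.D^[k] (S.τ v a) := by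
  induction k with
  | zero => rfl
  | succ k ih =>
    rw [Psi_succ, sigmaWord_cons, Function.iterate_succ_apply', Function.iterate_succ_apply',
      tau_sigma_D, ih]

lemma twistWord_Psi (a v : X) (k : ℕ) : S.twistWord (S.Psi k a) v = S.Psi k (S.τ v a) := by
  induction k with
  | zero => rfl
  | succ k ih => rw [Psi_succ, twistWord_cons, tau_sigmaWord_Psi, ih, Psi_succ]

lemma sigmaWord_Psi_D (z : X) (k : ℕ) : S.sigmaWord (S.Psi k (S.D z)) z = S.D^[k] z := by
  induction k with
  | zero => rfl
  | succ k ih =>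
    rw [Psi_succ, sigmaWord_cons, ih, ← Function.iterate_succ_apply, Function.iterate_succ_apply',
      sigma_D]

lemma sigmaWord_Psi_eq_iff (l : ℕ) (a z : X) :
    S.sigmaWord (S.Psi (l + 1) a) z = S.D^[l] a ↔ S.D z = a := by
  obtain ⟨a, rfl⟩ := S.D_bijective.2 a
  rw [← Function.iterate_succ_apply, ← S.sigmaWord_Psi_D a (l + 1),
    (S.sigmaWord_injective _).eq_iff, S.D_bijective.1.eq_iff]

end Psi

section Blocks

variable (S : NDIS X)

def blockWord (B : List (ℕ × X)) : List X := (B.map fun q => S.Psi q.1 q.2).flatten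

def totalLength (B : List (ℕ × X)) : ℕ := (B.map Prod.fst).sum

def factorialProd (B : List (ℕ × X)) : ℕ := ((B.map Prod.fst).map Nat.factorial).prod

/-- The blocks of `B` after a letter `v` standing right of them has been moved to the front
(see `blockWord_twistBlocks`). -/
def twistBlocks : List (ℕ × X) → X → List (ℕ × X)
  | [], _ => []
  | q :: B, v => (q.1, S.τ (S.sigmaWord (S.blockWord B) v) q.2) :: twistBlocks B v

@[simp] lemma blockWord_cons (q : ℕ × X) (B : List (ℕ × X)) :
    S.blockWord (q :: B) = S.Psi q.1 q.2 ++ S.blockWord B := rfl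

@[simp] lemma blockWord_append (B C : List (ℕ × X)) :
    S.blockWord (B ++ C) = S.blockWord B ++ S.blockWord C := by
  simp [blockWord]

lemma length_blockWord (B : List (ℕ × X)) : (S.blockWord B).length = totalLength B := by
  induction B with
  | nil => rfl
  | cons q B ih => simp [ih, totalLength]

@[simp] lemma twistBlocks_cons (q : ℕ × X) (B : List (ℕ × X)) (v : X) :
    S.twistBlocks (q :: B) v =
      (q.1, S.τ (S.sigmaWord (S.blockWord B) v) q.2) :: S.twistBlocks B v :=
  rfl

@[simp] lemma map_fst_twistBlocks (B : List (ℕ × X)) (v : X) :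
    (S.twistBlocks B v).map Prod.fst = B.map Prod.fst := by
  induction B with
  | nil => rfl
  | cons q B ih => simp [ih]

@[simp] lemma length_twistBlocks (B : List (ℕ × X)) (v : X) :
    (S.twistBlocks B v).length = B.length := by
  rw [← List.length_map (f := Prod.fst), map_fst_twistBlocks, List.length_map]

lemma twistBlocks_append (B C : List (ℕ × X)) (v : X) :
    S.twistBlocks (B ++ C) v =
      S.twistBlocks B (S.sigmaWord (S.blockWord C) v) ++ S.twistBlocks C v := by
  induction B with
  | nil => rfl
  | cons q B ih => simp [ih, sigmaWord_append]

lemma blockWord_twistBlocks (B : List (ℕ × X)) (v : X) :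
    S.blockWord (S.twistBlocks B v) = S.twistWord (S.blockWord B) v := by
  induction B with
  | nil => rfl
  | cons q B ih => rw [twistBlocks_cons, blockWord_cons, blockWord_cons, twistWord_append, ih,
      twistWord_Psi]

lemma twistBlocks_twistBlocks (B : List (ℕ × X)) (y z : X) :
    S.twistBlocks (S.twistBlocks B (S.σ y z)) (S.τ z y) = S.twistBlocks (S.twistBlocks B y) z := by
  induction B with
  | nil => rfl
  | cons q B ih =>
    simp only [twistBlocks_cons, ih, blockWord_twistBlocks,
      S.tau_tau_sigmaWord_twistWord (S.blockWord B)]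

lemma factorialProd_eq_one_of_totalLength_eq_zero {B : List (ℕ × X)} (h : totalLength B = 0) :
    factorialProd B = 1 := by
  rw [totalLength, List.sum_eq_zero_iff] at h
  exact List.prod_eq_one fun k hk => by
    obtain ⟨l, hl, rfl⟩ := List.mem_map.1 hk
    rw [h l hl, Nat.factorial_zero]

end Blocks

section Extraction

variable (S : NDIS X) [Nonempty X]

/-- The `i`-th block of `B`, or an empty block if `i` is out of range. -/
noncomputable def block (B : List (ℕ × X)) (i : ℕ) : ℕ × X := B.getD i (0, Classical.arbitrary X)

lemma block_fst (B : List (ℕ × X)) (i : ℕ) : (block B i).1 = (B.map Prod.fst).getD i 0 :=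
  (List.getD_map B _ Prod.fst).symm

lemma lt_length_of_block_pos {B : List (ℕ × X)} {i : ℕ} (h : 0 < (block B i).1) :
    i < B.length := by
  by_contra h'
  rw [block, List.getD_eq_default _ _ (not_lt.1 h')] at h
  exact lt_irrefl 0 h

lemma block_append_cons_length (p s : List (ℕ × X)) (q : ℕ × X) :
    block (p ++ q :: s) p.length = q := by
  simp [block]

lemma block_append_cons_add (p s : List (ℕ × X)) (q : ℕ × X) (k : ℕ) :
    block (p ++ q :: s) (p.length + 1 + k) = block s k := by
  rw [block, List.getD_append_right _ _ _ _ (by omega),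
    show p.length + 1 + k - p.length = k + 1 by omega, List.getD_cons_succ, block]

lemma block_ofFn {k : ℕ} (f : Fin k → ℕ × X) (t : Fin k) : block (List.ofFn f) t = f t := by
  rw [block, List.getD_eq_getElem _ _ (by simp), List.getElem_ofFn]

lemma exists_split {B : List (ℕ × X)} {i : ℕ} (h : 0 < (block B i).1) :
    ∃ p l a s, B = p ++ (l + 1, a) :: s ∧ p.length = i := by
  have hi := lt_length_of_block_pos h
  refine ⟨B.take i, (block B i).1 - 1, (block B i).2, B.drop (i + 1), ?_, by simp; omega⟩
  rw [Nat.sub_add_cancel h, block, List.getD_eq_getElem _ _ hi, ← List.drop_eq_getElem_cons hi,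
    List.take_append_drop]

lemma exists_split₂ {B : List (ℕ × X)} {i j : ℕ} (hij : i < j) (hi : 0 < (block B i).1)
    (hj : 0 < (block B j).1) :
    ∃ p l a m g b s, B = p ++ (l + 1, a) :: (m ++ (g + 1, b) :: s) ∧ p.length = i ∧
      p.length + 1 + m.length = j := by
  obtain ⟨p, l, a, s', rfl, rfl⟩ := exists_split hi
  rw [← Nat.add_sub_of_le (Nat.succ_le_of_lt hij), block_append_cons_add] at hj
  obtain ⟨m, g, b, s, rfl, hm⟩ := exists_split hj
  exact ⟨p, l, a, m, g, b, s, rfl, rfl, by omega⟩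

noncomputable def firstLetter (B : List (ℕ × X)) (i : ℕ) : X :=
  S.D^[(block B i).1 - 1] (block B i).2

/-- The letter that arrives in front when the first letter of the `i`-th block of `B` is moved
to the front of `blockWord B`. -/
noncomputable def front (B : List (ℕ × X)) (i : ℕ) : X :=
  S.sigmaWord (S.blockWord (B.take i)) (S.firstLetter B i)

/-- The blocks of the word left behind by that move. -/
noncomputable def extract (B : List (ℕ × X)) (i : ℕ) : List (ℕ × X) :=
  S.twistBlocks (B.take i) (S.firstLetter B i) ++
    ((block B i).1 - 1, (block B i).2) :: B.drop (i + 1)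

variable {S}

lemma front_eq {B p s : List (ℕ × X)} {l i : ℕ} {a : X} (hB : B = p ++ (l + 1, a) :: s)
    (hi : p.length = i) : S.front B i = S.sigmaWord (S.blockWord p) (S.D^[l] a) := by
  subst hB hi
  simp [front, firstLetter, block_append_cons_length]

lemma extract_eq {B p s : List (ℕ × X)} {l i : ℕ} {a : X} (hB : B = p ++ (l + 1, a) :: s)
    (hi : p.length = i) : S.extract B i = S.twistBlocks p (S.D^[l] a) ++ (l, a) :: s := by
  subst hB hi
  simp [extract, firstLetter, block_append_cons_length]

lemma block_extract_fst {B : List (ℕ × X)} {i : ℕ} (hi : 0 < (block B i).1) (j : ℕ) :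
    (block (S.extract B i) j).1 = if j = i then (block B i).1 - 1 else (block B j).1 := by
  obtain ⟨p, l, a, s, rfl, rfl⟩ := exists_split hi
  rw [extract_eq rfl rfl, block_append_cons_length, block_fst, block_fst]
  simp only [List.map_append, List.map_cons, map_fst_twistBlocks]
  rcases lt_trichotomy j p.length with h | rfl | h
  · simp [List.getElem?_append_left, h, h.ne]
  · simp
  · obtain ⟨k, rfl⟩ := Nat.exists_eq_add_of_lt h
    rw [List.getD_append_right _ _ _ _ (by simp; omega),
      List.getD_append_right _ _ _ _ (by simp; omega)]
    simp [show p.length + k + 1 - p.length = k + 1 by omega, h.ne']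

lemma totalLength_extract {B : List (ℕ × X)} {i : ℕ} (hi : 0 < (block B i).1) :
    totalLength (S.extract B i) + 1 = totalLength B := by
  obtain ⟨p, l, a, s, rfl, rfl⟩ := exists_split hi
  simp only [extract_eq rfl rfl, totalLength, List.map_append, List.map_cons,
    map_fst_twistBlocks, List.sum_append, List.sum_cons]
  omega

lemma block_mul_factorialProd_extract {B : List (ℕ × X)} {i : ℕ} (hi : 0 < (block B i).1) :
    (block B i).1 * factorialProd (S.extract B i) = factorialProd B := by
  obtain ⟨p, l, a, s, rfl, rfl⟩ := exists_split hi
  simp only [extract_eq rfl rfl, block_append_cons_length, factorialProd, List.map_append,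
    List.map_cons, map_fst_twistBlocks, List.prod_append, List.prod_cons, Nat.factorial_succ]
  ring

lemma sum_block_fst (B : List (ℕ × X)) :
    ∑ i ∈ Finset.range B.length, (block B i).1 = totalLength B := by
  induction B with
  | nil => rfl
  | cons q B ih =>
    rw [List.length_cons, Finset.sum_range_succ', totalLength, List.map_cons, List.sum_cons,
      ← totalLength, ← ih, add_comm]
    rfl

end Extraction

section Exchange

variable {S : NDIS X} [Nonempty X]

lemma block_pos_of_block_extract_pos {B : List (ℕ × X)} {i j : ℕ} (hi : 0 < (block B i).1)
    (hj : 0 < (block (S.extract B i) j).1) :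
    0 < (block B j).1 ∧ 0 < (block (S.extract B j) i).1 := by
  rw [block_extract_fst hi] at hj
  by_cases hji : j = i
  · subst hji
    rw [if_pos rfl] at hj
    rw [block_extract_fst hi, if_pos rfl]
    exact ⟨hi, hj⟩
  · rw [if_neg hji] at hj
    rw [block_extract_fst hj, if_neg (Ne.symm hji)]
    exact ⟨hj, hi⟩

lemma front_eq_D_front_extract {B : List (ℕ × X)} {i : ℕ} (h : 2 ≤ (block B i).1) :
    S.front B i = S.D (S.front (S.extract B i) i) := by
  obtain ⟨p, l, a, s, rfl, rfl⟩ := exists_split (by omega : 0 < (block B i).1)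
  obtain ⟨l, rfl⟩ : ∃ l', l = l' + 1 := ⟨l - 1, by simp [block_append_cons_length] at h; omega⟩
  rw [front_eq rfl rfl, front_eq (extract_eq rfl rfl) (length_twistBlocks ..),
    blockWord_twistBlocks, Function.iterate_succ_apply', sigmaWord_D]

lemma front_eq₂ {B p m s : List (ℕ × X)} {l g j : ℕ} {a b : X}
    (hB : B = p ++ (l, a) :: (m ++ (g + 1, b) :: s)) (hj : p.length + 1 + m.length = j) :
    S.front B j = S.sigmaWord (S.blockWord p)
      (S.sigmaWord (S.Psi l a) (S.sigmaWord (S.blockWord m) (S.D^[g] b))) := by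
  rw [front_eq (p := p ++ (l, a) :: m) (s := s) (l := g) (a := b) (by simp [hB]) (by simp; omega)]
  simp [sigmaWord_append]

lemma extract_eq₂ {B p m s : List (ℕ × X)} {l g j : ℕ} {a b : X}
    (hB : B = p ++ (l, a) :: (m ++ (g + 1, b) :: s)) (hj : p.length + 1 + m.length = j) :
    S.extract B j =
      S.twistBlocks p (S.sigmaWord (S.Psi l a) (S.sigmaWord (S.blockWord m) (S.D^[g] b))) ++
        (l, S.τ (S.sigmaWord (S.blockWord m) (S.D^[g] b)) a) ::
          (S.twistBlocks m (S.D^[g] b) ++ (g, b) :: s) := by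
  rw [extract_eq (p := p ++ (l, a) :: m) (s := s) (l := g) (a := b) (by simp [hB]) (by simp; omega)]
  simp [twistBlocks_append, sigmaWord_append]

lemma exchange_of_lt {B p m s : List (ℕ × X)} {l g i j : ℕ} {a b : X}
    (hB : B = p ++ (l + 1, a) :: (m ++ (g + 1, b) :: s)) (hi : p.length = i)
    (hj : p.length + 1 + m.length = j) :
    S.r (S.front B i, S.front (S.extract B i) j) = (S.front B j, S.front (S.extract B j) i) ∧
      S.extract (S.extract B i) j = S.extract (S.extract B j) i := by
  set v := S.sigmaWord (S.blockWord m) (S.D^[g] b)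
  set z := S.sigmaWord (S.Psi l a) v
  have hBi := extract_eq (S := S) hB hi
  have hBj : S.extract B j = S.twistBlocks p (S.σ (S.D^[l] a) z) ++
      (l + 1, S.τ v a) :: (S.twistBlocks m (S.D^[g] b) ++ (g, b) :: s) := by
    rw [extract_eq₂ hB hj, Psi_succ, sigmaWord_cons]
  have hτ : S.D^[l] (S.τ v a) = S.τ z (S.D^[l] a) := (S.tau_sigmaWord_Psi a v l).symm
  have hj' : (S.twistBlocks p (S.D^[l] a)).length + 1 + m.length = j := by simpa using hj
  have hi' : (S.twistBlocks p (S.σ (S.D^[l] a) z)).length = i := by simpa using hi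
  constructor
  · rw [front_eq hB hi, front_eq₂ hB hj, front_eq₂ hBi hj', front_eq hBj hi',
      blockWord_twistBlocks, blockWord_twistBlocks, hτ, Psi_succ, sigmaWord_cons]
    exact S.r_sigmaWord_twistWord _ _ _
  · rw [extract_eq₂ hBi hj', extract_eq hBj hi', hτ, twistBlocks_twistBlocks]

/-- For `i = j` this is the fixed point `r (D c, c) = (D c, c)`, and the case `j < i` follows
from `i < j` by involutivity. -/
lemma exchange {B : List (ℕ × X)} {i j : ℕ} (hi : 0 < (block B i).1)
    (hj : 0 < (block (S.extract B i) j).1) :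
    S.r (S.front B i, S.front (S.extract B i) j) = (S.front B j, S.front (S.extract B j) i) ∧
      S.extract (S.extract B i) j = S.extract (S.extract B j) i := by
  rw [block_extract_fst hi] at hj
  rcases lt_trichotomy i j with h | rfl | h
  · rw [if_neg h.ne'] at hj
    obtain ⟨p, l, a, m, g, b, s, hB, hpi, hpj⟩ := exists_split₂ h hi hj
    exact exchange_of_lt hB hpi hpj
  · rw [if_pos rfl] at hj
    refine ⟨?_, rfl⟩
    rw [front_eq_D_front_extract (by omega)]
    exact S.r_D _
  · rw [if_neg h.ne] at hj
    obtain ⟨p, l, a, m, g, b, s, hB, hpj, hpi⟩ := exists_split₂ h hj hi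
    obtain ⟨hr, he⟩ := exchange_of_lt hB hpj hpi
    refine ⟨?_, he.symm⟩
    rw [← hr]
    exact S.invol _

end Exchange

section Orbits

variable {S : NDIS X}

lemma Step.symm {x y : List X} (h : S.Step x y) : S.Step y x := by
  obtain ⟨u, v, i, j, rfl, rfl⟩ := h
  exact ⟨u, v, S.σ i j, S.τ j i, rfl, by rw [S.sigma_sigma_tau, S.tau_tau_sigma]⟩

lemma Step.length_eq {x y : List X} (h : S.Step x y) : x.length = y.length := by
  obtain ⟨u, v, i, j, rfl, rfl⟩ := h
  simp

lemma Step.cons {x y : List X} (c : X) (h : S.Step x y) : S.Step (c :: x) (c :: y) := by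
  obtain ⟨u, v, i, j, rfl, rfl⟩ := h
  exact ⟨c :: u, v, i, j, rfl, rfl⟩

lemma Step.cons_cases {c : X} {z y : List X} (h : S.Step (c :: z) y) :
    (∃ z', S.Step z z' ∧ y = c :: z') ∨
      ∃ d w, z = d :: w ∧ y = (S.r (c, d)).1 :: (S.r (c, d)).2 :: w := by
  obtain ⟨_ | ⟨c', u⟩, v, i, j, hz, rfl⟩ := h
  · obtain ⟨rfl, rfl⟩ := List.cons_eq_cons.mp hz
    exact Or.inr ⟨j, v, rfl, rfl⟩
  · obtain ⟨rfl, rfl⟩ := List.cons_eq_cons.mp hz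
    exact Or.inl ⟨_, ⟨u, v, i, j, rfl, rfl⟩, rfl⟩

lemma length_eq_of_eqvGen {x y : List X} (h : Relation.EqvGen S.Step x y) :
    x.length = y.length := by
  induction h with
  | rel _ _ h => exact h.length_eq
  | refl => rfl
  | symm _ _ _ ih => exact ih.symm
  | trans _ _ _ _ _ ih₁ ih₂ => exact ih₁.trans ih₂

lemma eqvGen_cons {x y : List X} (c : X) (h : Relation.EqvGen S.Step x y) :
    Relation.EqvGen S.Step (c :: x) (c :: y) := by
  induction h with
  | rel _ _ h => exact .rel _ _ (h.cons c)
  | refl => exact .refl _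
  | symm _ _ _ ih => exact .symm _ _ ih
  | trans _ _ _ _ _ ih₁ ih₂ => exact .trans _ _ _ ih₁ ih₂

lemma eqvGen_move_front (u w : List X) (z : X) :
    Relation.EqvGen S.Step (u ++ z :: w) (S.sigmaWord u z :: (S.twistWord u z ++ w)) := by
  induction u with
  | nil => exact .refl _
  | cons p u ih =>
    exact .trans _ _ _ (eqvGen_cons p ih) (.rel _ _ ⟨[], _, p, S.sigmaWord u z, rfl, rfl⟩)

lemma orb_nil : S.Orb [] = {[]} := by
  ext y
  refine ⟨fun hy => List.eq_nil_of_length_eq_zero (length_eq_of_eqvGen hy).symm, ?_⟩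
  rintro rfl
  exact .refl _

lemma orb_finite [Finite X] (x : List X) : (S.Orb x).Finite :=
  (List.finite_length_eq X x.length).subset fun _ hy => (length_eq_of_eqvGen hy).symm

lemma orb_subset_of_closed {C : Set (List X)} (hC : ∀ y ∈ C, ∀ z, S.Step y z → z ∈ C)
    {x y : List X} (hy : y ∈ C) (hxy : Relation.EqvGen S.Step x y) : S.Orb x ⊆ C := by
  have key : ∀ a b, Relation.EqvGen S.Step a b → (a ∈ C ↔ b ∈ C) := by
    intro a b h
    induction h with
    | rel a b h => exact ⟨fun ha => hC a ha b h, fun hb => hC b hb a h.symm⟩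
    | refl => exact Iff.rfl
    | symm _ _ _ ih => exact ih.symm
    | trans _ _ _ _ _ ih₁ ih₂ => exact ih₁.trans ih₂
  exact fun z hz => (key y z (.trans _ _ _ (.symm _ _ hxy) hz)).1 hy

end Orbits

section Decomposition

variable (S : NDIS X) [Nonempty X]

noncomputable def nonemptyBlocks (B : List (ℕ × X)) : Finset ℕ :=
  (Finset.range B.length).filter fun i => 0 < (block B i).1

noncomputable def frontPart (B : List (ℕ × X)) (i : ℕ) : Set (List X) :=
  (S.front B i :: ·) '' S.Orb (S.blockWord (S.extract B i))

def DistinctFronts (B : List (ℕ × X)) : Prop := Set.InjOn (S.front B) (nonemptyBlocks B)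

variable {S}

@[simp] lemma mem_nonemptyBlocks {B : List (ℕ × X)} {i : ℕ} :
    i ∈ nonemptyBlocks B ↔ 0 < (block B i).1 := by
  simpa [nonemptyBlocks] using lt_length_of_block_pos

lemma exists_mem_nonemptyBlocks {B : List (ℕ × X)} (h : 0 < totalLength B) :
    ∃ i, i ∈ nonemptyBlocks B := by
  rw [← sum_block_fst] at h
  obtain ⟨i, -, hi⟩ := Finset.exists_ne_zero_of_sum_ne_zero h.ne'
  exact ⟨i, mem_nonemptyBlocks.2 (Nat.pos_of_ne_zero hi)⟩

lemma eqvGen_front_extract {B : List (ℕ × X)} {i : ℕ} (hi : 0 < (block B i).1) :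
    Relation.EqvGen S.Step (S.blockWord B) (S.front B i :: S.blockWord (S.extract B i)) := by
  obtain ⟨p, l, a, s, rfl, rfl⟩ := exists_split hi
  rw [front_eq rfl rfl, extract_eq rfl rfl]
  simpa [Psi_succ, blockWord_twistBlocks] using
    eqvGen_move_front (S.blockWord p) (S.Psi l a ++ S.blockWord s) (S.D^[l] a)

lemma frontPart_subset_orb {B : List (ℕ × X)} {i : ℕ} (hi : 0 < (block B i).1) :
    S.frontPart B i ⊆ S.Orb (S.blockWord B) := by
  rintro _ ⟨z, hz, rfl⟩
  exact .trans _ _ _ (eqvGen_front_extract hi) (eqvGen_cons _ hz)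

lemma r_cons_mem_frontPart {B : List (ℕ × X)} {i j : ℕ} {w : List X}
    (hi : 0 < (block B i).1) (hj : 0 < (block (S.extract B i) j).1)
    (hw : w ∈ S.Orb (S.blockWord (S.extract (S.extract B i) j))) :
    (S.r (S.front B i, S.front (S.extract B i) j)).1 ::
      (S.r (S.front B i, S.front (S.extract B i) j)).2 :: w ∈ S.frontPart B j := by
  obtain ⟨hr, he⟩ := exchange hi hj
  obtain ⟨hBj, hBji⟩ := block_pos_of_block_extract_pos hi hj
  rw [hr]
  rw [he] at hw
  exact ⟨_, frontPart_subset_orb hBji ⟨w, hw, rfl⟩, rfl⟩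

theorem orb_blockWord_eq_biUnion (B : List (ℕ × X)) (hB : 0 < totalLength B) :
    S.Orb (S.blockWord B) = ⋃ i ∈ nonemptyBlocks B, S.frontPart B i := by
  induction hn : totalLength B using Nat.strong_induction_on generalizing B with
  | _ n ih =>
  set C := ⋃ i ∈ nonemptyBlocks B, S.frontPart B i
  have hclosed : ∀ y ∈ C, ∀ y', S.Step y y' → y' ∈ C := by
    simp only [C, Set.mem_iUnion, mem_nonemptyBlocks]
    rintro _ ⟨i, hi, z, hz, rfl⟩ y' hy'
    rcases hy'.cons_cases with ⟨z', hzz', rfl⟩ | ⟨d, w, rfl, rfl⟩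
    · exact ⟨i, hi, z', .trans _ _ _ hz (.rel _ _ hzz'), rfl⟩
    · have hlen : totalLength (S.extract B i) + 1 = n := hn ▸ totalLength_extract hi
      have hpos : 0 < totalLength (S.extract B i) := by
        rw [← length_blockWord, length_eq_of_eqvGen hz]
        exact Nat.succ_pos _
      rw [ih _ (by omega) _ hpos rfl] at hz
      simp only [Set.mem_iUnion, mem_nonemptyBlocks] at hz
      obtain ⟨j, hj, w', hw', hdw⟩ := hz
      obtain ⟨rfl, rfl⟩ := List.cons_eq_cons.mp hdw
      exact ⟨j, (block_pos_of_block_extract_pos hi hj).1, r_cons_mem_frontPart hi hj hw'⟩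
  obtain ⟨i, hi⟩ := exists_mem_nonemptyBlocks hB
  refine (orb_subset_of_closed hclosed ?_ (eqvGen_front_extract (mem_nonemptyBlocks.1 hi))).antisymm
    (Set.iUnion₂_subset fun j hj => frontPart_subset_orb (mem_nonemptyBlocks.1 hj))
  exact Set.mem_biUnion hi ⟨_, .refl _, rfl⟩

lemma DistinctFronts.extract {B : List (ℕ × X)} {i : ℕ} (hF : S.DistinctFronts B)
    (hi : 0 < (block B i).1) : S.DistinctFronts (S.extract B i) := by
  intro j hj j' hj' h
  simp only [Finset.mem_coe, mem_nonemptyBlocks] at hj hj'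
  have hσ : ∀ t, 0 < (block (S.extract B i) t).1 →
      S.σ (S.front B i) (S.front (S.extract B i) t) = S.front B t := fun t ht =>
    congrArg Prod.fst (exchange hi ht).1
  refine hF ?_ ?_ ((hσ j hj).symm.trans (h ▸ hσ j' hj'))
  · simpa using (block_pos_of_block_extract_pos hi hj).1
  · simpa using (block_pos_of_block_extract_pos hi hj').1

theorem card_orb_blockWord_mul [Finite X] (B : List (ℕ × X)) (hF : S.DistinctFronts B) :
    (S.Orb (S.blockWord B)).ncard * factorialProd B = (totalLength B).factorial := by
  induction hn : totalLength B using Nat.strong_induction_on generalizing B with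
  | _ n ih =>
  rcases Nat.eq_zero_or_pos n with rfl | hpos
  · rw [List.eq_nil_of_length_eq_zero ((length_blockWord S B).trans hn), orb_nil,
      Set.ncard_singleton, factorialProd_eq_one_of_totalLength_eq_zero hn, Nat.factorial_zero]
  have hdisj : (nonemptyBlocks B : Set ℕ).PairwiseDisjoint (S.frontPart B) := by
    intro i hi j hj hij
    refine Set.disjoint_left.2 ?_
    rintro _ ⟨z, -, rfl⟩ ⟨z', -, h⟩
    exact hij (hF hi hj (List.cons_eq_cons.mp h).1.symm)
  have hpart : ∀ i ∈ nonemptyBlocks B,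
      (S.frontPart B i).ncard * factorialProd B = (block B i).1 * (n - 1).factorial := by
    intro i hi
    rw [mem_nonemptyBlocks] at hi
    have hlen : totalLength (S.extract B i) = n - 1 := by
      have := totalLength_extract (S := S) hi; omega
    rw [frontPart, Set.ncard_image_of_injective _ List.cons_injective,
      ← block_mul_factorialProd_extract (S := S) hi, mul_left_comm,
      ih _ (by omega) _ (hF.extract hi) hlen]
  rw [orb_blockWord_eq_biUnion B (hn ▸ hpos), ← Finset.set_biUnion_coe,
    Set.Finite.ncard_biUnion (s := S.frontPart B) (Finset.finite_toSet _)
      (fun i _ => (orb_finite _).image _) hdisj,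
    finsum_mem_coe_finset, Finset.sum_mul, Finset.sum_congr rfl hpart, ← Finset.sum_mul,
    nonemptyBlocks, Finset.sum_filter_of_ne fun i _ h => Nat.pos_of_ne_zero h, sum_block_fst, hn,
    Nat.mul_factorial_pred hpos.ne']

end Decomposition

section LambdaElements

variable {S : NDIS X}

lemma map_ofFn_Psi {k : ℕ} (L : Fin k → ℕ) (a : Fin k → X) :
    (List.ofFn fun t => (L t, a t)).map (fun q => S.Psi q.1 q.2) =
      List.ofFn fun t => S.Psi (L t) (a t) := by
  simp [List.map_ofFn, Function.comp_def]

lemma midword_eq_blockWord {k : ℕ} {L : Fin k → ℕ} {a : Fin k → X} {p m s : List (ℕ × X)}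
    {q q' : ℕ × X} (hB : List.ofFn (fun t => (L t, a t)) = p ++ q :: (m ++ q' :: s))
    (hi : p.length < k) (hj : p.length + 1 + m.length < k) :
    S.midword L a ⟨p.length, hi⟩ ⟨p.length + 1 + m.length, hj⟩ = S.blockWord m := by
  rw [midword, ← map_ofFn_Psi, hB, ← List.map_drop, ← List.map_take]
  have hp : (p.map fun q => S.Psi q.1 q.2).length ≤ p.length + 1 := by simp
  simp [blockWord, List.drop_append, List.take_append, List.drop_eq_nil_of_le hp,
    show p.length + 1 + m.length - p.length - 1 = m.length by omega]

lemma front_eq_front_iff [Nonempty X] {B p m s : List (ℕ × X)} {l g i j : ℕ} {a b : X}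
    (hB : B = p ++ (l + 1, a) :: (m ++ (g + 1, b) :: s)) (hi : p.length = i)
    (hj : p.length + 1 + m.length = j) :
    S.front B i = S.front B j ↔ S.D^[g + 1] b = S.tauWord (S.blockWord m) a := by
  rw [front_eq hB hi, front_eq₂ hB hj, (S.sigmaWord_injective _).eq_iff, eq_comm,
    sigmaWord_Psi_eq_iff, Function.iterate_succ_apply']
  constructor
  · rintro rfl
    rw [tauWord_D_sigmaWord]
  · intro h
    apply S.tauWord_injective (S.blockWord m)
    rw [tauWord_D_sigmaWord, h]

lemma distinctFronts_of_isLambdaFamily [Nonempty X] {k : ℕ} {L : Fin k → ℕ} {a : Fin k → X}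
    (h : S.IsLambdaFamily L a) : S.DistinctFronts (List.ofFn fun t => (L t, a t)) := by
  set B := List.ofFn fun t => (L t, a t)
  suffices key : ∀ i j, i < j → 0 < (block B i).1 → 0 < (block B j).1 →
      S.front B i ≠ S.front B j by
    intro i hi j hj hij
    simp only [Finset.mem_coe, mem_nonemptyBlocks] at hi hj
    by_contra hne
    rcases lt_or_gt_of_ne hne with hlt | hlt
    · exact key i j hlt hi hj hij
    · exact key j i hlt hj hi hij.symm
  intro i j hij hi hj hfront
  obtain ⟨p, l, b, m, g, c, s, hB, rfl, rfl⟩ := exists_split₂ hij hi hj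
  have hk : p.length + 1 + m.length < k := by simpa [B] using lt_length_of_block_pos hj
  have hbi : block B p.length = (L ⟨p.length, by omega⟩, a ⟨p.length, by omega⟩) :=
    block_ofFn _ ⟨p.length, by omega⟩
  have hbj : block B (p.length + 1 + m.length) = (L ⟨_, hk⟩, a ⟨_, hk⟩) := block_ofFn _ ⟨_, hk⟩
  rw [hB, block_append_cons_length] at hbi
  rw [hB, block_append_cons_add, block_append_cons_length] at hbj
  simp only [Prod.mk.injEq] at hbi hbj
  refine h ⟨p.length, by omega⟩ ⟨_, hk⟩ (Fin.mk_lt_mk.2 hij) ?_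
  rw [midword_eq_blockWord hB, ← hbi.2, ← hbj.2, ← hbj.1,
    ← (front_eq_front_iff hB rfl rfl).1 hfront]
  exact ((Function.leftInverse_invFun S.D_bijective.1).iterate _ _).symm

end LambdaElements

end NDIS

theorem card_orbit_of_lambda_element_general {X : Type*} [Fintype X] [Nonempty X]
    (S : NDIS X)
    {n k : ℕ} (L : Fin k → ℕ)
    (hsum : ∑ t, L t = n)
    (x : List X) (hx : S.IsLambdaWord L x) :
    (S.Orb x).ncard = Nat.factorial n / ∏ t, Nat.factorial (L t) := by
  obtain ⟨a, rfl, ha⟩ := hx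
  set B := List.ofFn fun t => (L t, a t)
  have hword : S.blockWord B = S.word L a := by
    rw [NDIS.blockWord, NDIS.map_ofFn_Psi, NDIS.word]
  have hlength : NDIS.totalLength B = n := by
    simpa [B, NDIS.totalLength, List.map_ofFn, Function.comp_def, List.sum_ofFn] using hsum
  have hfact : NDIS.factorialProd B = ∏ t, Nat.factorial (L t) := by
    simp [B, NDIS.factorialProd, List.map_ofFn, Function.comp_def, List.prod_ofFn]
  have hcard := S.card_orb_blockWord_mul B (NDIS.distinctFronts_of_isLambdaFamily ha)
  rw [hword, hlength, hfact] at hcard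
  rw [← hcard, Nat.mul_div_cancel _ (Finset.prod_pos fun t _ => Nat.factorial_pos _)]

/-- Let `(X, r)` be a non-degenerate involutive solution with `|X| = m ≥ 2`,
`λ ∈ P(n, m)` with positive parts `L = (λ_1 ≥ ⋯ ≥ λ_k > 0)`, and `x ∈ X^n` a
`λ`-element. Then `|O(x)| = n!/(λ_1! λ_2! ⋯ λ_k!)`. -/
theorem card_orbit_of_lambda_element {X : Type*} [Fintype X] [Nonempty X]
    (S : NDIS X) (hm : 2 ≤ Fintype.card X)
    {n k : ℕ} (L : Fin k → ℕ) (hpos : ∀ t, 0 < L t) (hmono : Antitone L)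
    (hsum : ∑ t, L t = n) (hk : k ≤ Fintype.card X)
    (x : List X) (hx : S.IsLambdaWord L x) :
    (S.Orb x).ncard = Nat.factorial n / ∏ t, Nat.factorial (L t) :=
  card_orbit_of_lambda_element_general S L hsum x hx
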